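/- arXiv:1205.4288 — 5 statements merged into one kernel-verified Lean document; each statement's English description precedes it below -/
import Mathlib

section
/- Let D be a commutative ring and χ a group homomorphism from SL(2,D) to the multiplicative group of nonzero complex numbers. Then for every unit u of D and every b in D, χ(T(b·(u²−1))) = 1; in other words, the ideal of D generated by all u²−1 with u a unit of D is contained in the annihilator ideal {a ∈ D : χ(T(ab)) = 1 for all b ∈ D} of χ. -/
/-- The elementary matrix `T a = [[1,a],[0,1]]` as an element of `SL(2,D)`. -/
def Tmat {D : Type*} [CommRing D] (a : D) : Matrix.SpecialLinearGroup (Fin 2) D :=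
  ⟨!![1, a; 0, 1], by simp [Matrix.det_fin_two_of]⟩

/-!
Conjugating `T a` by `diag(u, u⁻¹)` gives `T (u² a)`, and a character to a commutative group
cannot see conjugation, so `χ (T (u² a)) = χ (T a)`. Since `T` is additive, this says
`χ (T ((u² - 1) a)) = 1`; the elements `a` with `χ (T (a b)) = 1` for all `b` form an ideal,
which therefore contains every `u² - 1`.
-/

section

variable {D : Type*} [CommRing D]

lemma Tmat_zero : Tmat (0 : D) = 1 := by
  ext i j
  fin_cases i <;> fin_cases j <;> rfl

lemma Tmat_add (a b : D) : Tmat (a + b) = Tmat a * Tmat b :=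
  Subtype.ext <| show !![1, a + b; 0, 1] = !![1, a; 0, 1] * !![1, b; 0, 1] by
    simp [add_comm]

def Dmat (u : Dˣ) : Matrix.SpecialLinearGroup (Fin 2) D :=
  ⟨!![(u : D), 0; 0, ((u⁻¹ : Dˣ) : D)], by simp [Matrix.det_fin_two_of]⟩
lemma Dmat_mul_Tmat (u : Dˣ) (a : D) : Dmat u * Tmat a = Tmat ((u : D) ^ 2 * a) * Dmat u := by
  have hu : (u : D) ^ 2 * a * ((u⁻¹ : Dˣ) : D) = (u : D) * a := by
    rw [pow_two, mul_right_comm, mul_assoc (u : D), Units.mul_inv, mul_one]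
  apply Subtype.ext
  change !![(u : D), 0; 0, ((u⁻¹ : Dˣ) : D)] * !![1, a; 0, 1] =
    !![1, (u : D) ^ 2 * a; 0, 1] * !![(u : D), 0; 0, ((u⁻¹ : Dˣ) : D)]
  simp [hu]

variable {G : Type*} [CommGroup G] (χ : Matrix.SpecialLinearGroup (Fin 2) D →* G)

lemma map_Tmat_units_sq_mul (u : Dˣ) (a : D) : χ (Tmat ((u : D) ^ 2 * a)) = χ (Tmat a) := by
  have h := congrArg χ (Dmat_mul_Tmat u a)
  rw [map_mul, map_mul, mul_comm] at h
  exact mul_right_cancel h.symm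

lemma map_Tmat_mul_units_sq_sub_one (u : Dˣ) (b : D) :
    χ (Tmat (b * ((u : D) ^ 2 - 1))) = 1 := by
  have h : χ (Tmat (b * ((u : D) ^ 2 - 1))) * χ (Tmat b) = χ (Tmat b) := by
    rw [← map_mul, ← Tmat_add, ← map_Tmat_units_sq_mul χ u b]
    congr 2
    ring
  exact mul_eq_right.mp h

def annihilator : Ideal D where
  carrier := {a | ∀ b, χ (Tmat (a * b)) = 1}
  zero_mem' _ := by rw [zero_mul, Tmat_zero, map_one]
  add_mem' ha ha' b := by rw [add_mul, Tmat_add, map_mul, ha, ha', one_mul]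
  smul_mem' c a ha b := by rw [smul_eq_mul, mul_assoc, mul_left_comm]; exact ha (c * b)

end

theorem units_sq_sub_one_in_annihilator {D : Type*} [CommRing D]
    (χ : Matrix.SpecialLinearGroup (Fin 2) D →* ℂˣ) :
    (∀ (u : Dˣ) (b : D), χ (Tmat (b * ((u : D) ^ 2 - 1))) = 1) ∧
    (∀ a ∈ Ideal.span {x : D | ∃ u : Dˣ, x = (u : D) ^ 2 - 1},
      ∀ b : D, χ (Tmat (a * b)) = 1) := by
  refine ⟨map_Tmat_mul_units_sq_sub_one χ, fun a ha => ?_⟩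
  suffices Ideal.span {x : D | ∃ u : Dˣ, x = (u : D) ^ 2 - 1} ≤ annihilator χ from this ha
  rw [Ideal.span_le]
  rintro _ ⟨u, rfl⟩ b
  rw [mul_comm]
  exact map_Tmat_mul_units_sq_sub_one χ u b
end

section
/- If D is a field and SL(2,D) admits a nontrivial group homomorphism into ℂˣ, then D is isomorphic to F₂ or to F₃. -/
/-!
If some `a ≠ 0` has `a ^ 2 ≠ 1`, commutators of `diag(a, a⁻¹)` with elementary matrices give every
elementary matrix; these generate `SL(2, D)`, which is therefore perfect, so every homomorphism
from it to an abelian group is trivial.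
Otherwise every nonzero element is `±1`, so `D` has at most three elements.
-/

theorem Group.IsPerfect.monoidHom_eq_one {G A : Type*} [Group G] [CommGroup A] [IsPerfect G]
    (f : G →* A) : f = 1 :=
  MonoidHom.ker_eq_top_iff.mp <| top_le_iff.mp <|
    IsPerfect.commutator_eq_top (G := G) ▸ Abelianization.commutator_subset_ker f

theorem nonempty_ringEquiv_zmod_two_or_three {K : Type*} [Field K]
    (h : ∀ a : K, a ≠ 0 → a ^ 2 = 1) :
    Nonempty (K ≃+* ZMod 2) ∨ Nonempty (K ≃+* ZMod 3) := by
  classical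
  have hmem : ∀ a : K, a ∈ ({0, 1, -1} : Finset K) := fun a => by
    by_cases ha : a = 0
    · simp [ha]
    · simpa [ha] using sq_eq_one_iff.mp (h a ha)
  let _ : Fintype K := ⟨{0, 1, -1}, hmem⟩
  have hle : Fintype.card K ≤ 3 := Finset.card_le_three
  have hge : 1 < Fintype.card K := Fintype.one_lt_card
  interval_cases hcard : Fintype.card K
  · exact .inl ⟨(ZMod.ringEquivOfPrime K Nat.prime_two hcard).symm⟩
  · exact .inr ⟨(ZMod.ringEquivOfPrime K Nat.prime_three hcard).symm⟩

theorem field_with_nontrivial_char {D : Type*} [Field D]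
    (χ : Matrix.SpecialLinearGroup (Fin 2) D →* ℂˣ) (hχ : χ ≠ 1) :
    Nonempty (D ≃+* ZMod 2) ∨ Nonempty (D ≃+* ZMod 3) := by
  by_cases hD : ∃ a : D, a ≠ 0 ∧ a ^ 2 ≠ 1
  · obtain ⟨a, ha, hasq⟩ := hD
    have : Group.IsPerfect (Matrix.SpecialLinearGroup (Fin 2) D) :=
      ⟨Matrix.SL2.commutator_eq_top ha hasq⟩
    exact absurd (Group.IsPerfect.monoidHom_eq_one χ) hχ
  · push Not at hD
    exact nonempty_ringEquiv_zmod_two_or_three hD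
end

section
/- Let D be a commutative ring in which SL(2,D) is generated by elementary matrices. If the ideal of D generated by the elements u²−1, where u runs over the units of D, equals all of D, then the abelianization of SL(2,D) is trivial. -/
/-!
Let `φ` be a homomorphism from `SL(2, D)` to a commutative group. Conjugation by
`diag(u, u⁻¹)` multiplies the corner entry of `[[1, b], [0, 1]]` by `u²`, so the additive map
`b ↦ φ [[1, b], [0, 1]]` kills `(u² - 1) D` for every unit `u`; these ideals sum to `D`, so it
vanishes. Conjugation by `[[0, 1], [-1, 0]]` turns upper elementary matrices into lower ones, so
`φ` kills every elementary matrix, hence all of `SL(2, D)`. Apply this to the abelianization map.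
-/

open Matrix
open scoped MatrixGroups

theorem AddMonoidHom.eq_zero_of_map_mul_eq_zero_of_span_eq_top {R M : Type*} [CommSemiring R]
    [AddCommMonoid M] (ψ : R →+ M) {S : Set R} (hS : Ideal.span S = ⊤)
    (h : ∀ s ∈ S, ∀ r, ψ (s * r) = 0) : ψ = 0 := by
  have hspan : ∀ x ∈ Ideal.span S, ∀ r, ψ (x * r) = 0 := fun x hx ↦ by
    induction hx using Submodule.span_induction with
    | mem s hs => exact h s hs
    | zero => simp
    | add x y _ _ hx hy => simp [add_mul, hx, hy]
    | smul a x _ hx => intro r; simpa [smul_eq_mul, mul_assoc, mul_left_comm] using hx (a * r)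
  ext x
  simpa using hspan 1 (hS ▸ Submodule.mem_top) x

theorem SemiconjBy.isConj {G : Type*} [Group G] {c a b : G} (h : SemiconjBy c a b) :
    IsConj a b :=
  ⟨toUnits c, h⟩

theorem MonoidHom.map_eq_of_isConj {G H : Type*} [Monoid G] [CommMonoid H] (φ : G →* H)
    {a b : G} (h : IsConj a b) : φ a = φ b :=
  isConj_iff_eq.1 (φ.map_isConj h)

namespace Matrix.SpecialLinearGroup

variable {D H : Type*} [CommRing D] [CommGroup H]

lemma coe_transvection_zero_one (a : D) :
    (transvection (zero_ne_one' (Fin 2)) a : Matrix (Fin 2) (Fin 2) D) = !![1, a; 0, 1] := by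
  ext i j; fin_cases i <;> fin_cases j <;> simp [transvection_coe]

lemma coe_transvection_one_zero (a : D) :
    (transvection (one_ne_zero' (Fin 2)) a : Matrix (Fin 2) (Fin 2) D) = !![1, 0; a, 1] := by
  ext i j; fin_cases i <;> fin_cases j <;> simp [transvection_coe]

lemma isConj_transvection_zero_one_unit_sq_mul (u : Dˣ) (a : D) :
    IsConj (transvection (zero_ne_one' (Fin 2)) a)
      (transvection (zero_ne_one' (Fin 2)) (u ^ 2 * a)) := by
  refine SemiconjBy.isConj (G := SL(2, D))
    (c := ⟨!![(u : D), 0; 0, ↑u⁻¹], by simp [det_fin_two_of]⟩) ?_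
  have hcorner : (u : D) ^ 2 * a * ↑u⁻¹ = u * a := by
    linear_combination (u * a : D) * u.mul_inv
  refine Subtype.ext (?_ : (_ * _ : Matrix (Fin 2) (Fin 2) D) = _ * _)
  simp [coe_transvection_zero_one, hcorner]

lemma isConj_transvection_one_zero_neg (a : D) :
    IsConj (transvection (zero_ne_one' (Fin 2)) a) (transvection (one_ne_zero' (Fin 2)) (-a)) := by
  refine SemiconjBy.isConj (G := SL(2, D))
    (c := ⟨!![0, 1; -1, 0], by simp [det_fin_two_of]⟩) ?_
  refine Subtype.ext (?_ : (_ * _ : Matrix (Fin 2) (Fin 2) D) = _ * _)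
  simp [coe_transvection_zero_one, coe_transvection_one_zero]

theorem monoidHom_apply_transvection_zero_one_eq_one (φ : SL(2, D) →* H)
    (hunits : Ideal.span {x : D | ∃ u : Dˣ, x = (u : D) ^ 2 - 1} = ⊤) (a : D) :
    φ (transvection (zero_ne_one' (Fin 2)) a) = 1 := by
  let ψ : D →+ Additive H :=
    { toFun b := Additive.ofMul (φ (transvection (zero_ne_one' (Fin 2)) b))
      map_zero' := by simp
      map_add' b c := by simp [transvection_add] }
  have hψ : ψ = 0 := by
    refine ψ.eq_zero_of_map_mul_eq_zero_of_span_eq_top hunits ?_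
    rintro _ ⟨u, rfl⟩ r
    have hconj : φ (transvection _ (u ^ 2 * r)) = φ (transvection _ r) :=
      (φ.map_eq_of_isConj (isConj_transvection_zero_one_unit_sq_mul u r)).symm
    rw [sub_mul, one_mul, map_sub, sub_eq_zero]
    exact congrArg Additive.ofMul hconj
  simpa [ψ] using DFunLike.congr_fun hψ a

theorem monoidHom_eq_one_of_unit_sq_sub_one_span_eq_top
    (hgen : Subgroup.closure {A : SL(2, D) |
      ∃ a : D, (A : Matrix (Fin 2) (Fin 2) D) = !![1, a; 0, 1] ∨
        (A : Matrix (Fin 2) (Fin 2) D) = !![1, 0; a, 1]} = ⊤)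
    (hunits : Ideal.span {x : D | ∃ u : Dˣ, x = (u : D) ^ 2 - 1} = ⊤) (φ : SL(2, D) →* H) :
    φ = 1 := by
  have hupper (a : D) := monoidHom_apply_transvection_zero_one_eq_one φ hunits a
  refine MonoidHom.eq_of_eqOn_dense hgen ?_
  rintro g ⟨a, hg | hg⟩
  · rw [Subtype.ext (hg.trans (coe_transvection_zero_one a).symm), hupper, MonoidHom.one_apply]
  · rw [Subtype.ext (hg.trans (coe_transvection_one_zero a).symm), MonoidHom.one_apply,
      ← neg_neg a, ← φ.map_eq_of_isConj (isConj_transvection_one_zero_neg (-a)), hupper]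

end Matrix.SpecialLinearGroup

theorem abelianization_trivial_of_unit_ideal {D : Type*} [CommRing D]
    (hgen : Subgroup.closure {A : Matrix.SpecialLinearGroup (Fin 2) D |
      ∃ a : D, (A : Matrix (Fin 2) (Fin 2) D) = !![1, a; 0, 1] ∨
        (A : Matrix (Fin 2) (Fin 2) D) = !![1, 0; a, 1]} = ⊤)
    (hb : Ideal.span {x : D | ∃ u : Dˣ, x = (u : D) ^ 2 - 1} = ⊤) :
    Subsingleton (Abelianization (Matrix.SpecialLinearGroup (Fin 2) D)) := by
  have hof := SpecialLinearGroup.monoidHom_eq_one_of_unit_sq_sub_one_span_eq_top hgen hb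
    Abelianization.of
  exact subsingleton_of_forall_eq 1 fun x ↦
    QuotientGroup.induction_on x fun g ↦ DFunLike.congr_fun hof g
end

section
/- Let R = F₂[t]/(t²), α = t + (t²). The function ε₄' on SL(2,R) defined by writing each element uniquely as A₀(1 + αB), with A₀ ∈ SL(2,F₂) and B = [[a,b],[c,a]] a trace-zero matrix over F₂, and setting ε₄'(A₀(1+αB)) = (−1)^{a+b+c}, is a group homomorphism SL(2,R) → {±1}. -/
instance myDecEq : DecidableEq (DualNumber (ZMod 2)) :=
  inferInstanceAs (DecidableEq (ZMod 2 × ZMod 2))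
instance myFin : Fintype (DualNumber (ZMod 2)) :=
  inferInstanceAs (Fintype (ZMod 2 × ZMod 2))

def myExp (A : Matrix.SpecialLinearGroup (Fin 2) (DualNumber (ZMod 2))) : ZMod 2 :=
  let p := ((A : Matrix (Fin 2) (Fin 2) (DualNumber (ZMod 2))) 0 0).fst
  let q := ((A : Matrix (Fin 2) (Fin 2) (DualNumber (ZMod 2))) 0 1).fst
  let r := ((A : Matrix (Fin 2) (Fin 2) (DualNumber (ZMod 2))) 1 0).fst
  let s := ((A : Matrix (Fin 2) (Fin 2) (DualNumber (ZMod 2))) 1 1).fst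
  let m := ((A : Matrix (Fin 2) (Fin 2) (DualNumber (ZMod 2))) 0 0).snd
  let n := ((A : Matrix (Fin 2) (Fin 2) (DualNumber (ZMod 2))) 0 1).snd
  let u := ((A : Matrix (Fin 2) (Fin 2) (DualNumber (ZMod 2))) 1 0).snd
  let v := ((A : Matrix (Fin 2) (Fin 2) (DualNumber (ZMod 2))) 1 1).snd
  s*m + q*u + s*n + q*v + r*m + p*u

def myf (A : Matrix.SpecialLinearGroup (Fin 2) (DualNumber (ZMod 2))) : ℤˣ :=
  (-1) ^ (myExp A).val

set_option maxHeartbeats 10000000 in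
set_option maxRecDepth 1000000 in
theorem myf_mul : ∀ A B : Matrix.SpecialLinearGroup (Fin 2) (DualNumber (ZMod 2)),
    myf (A * B) = myf A * myf B := by decide

set_option maxHeartbeats 10000000 in
set_option maxRecDepth 1000000 in
theorem myf_formula :
      ∀ (A : Matrix.SpecialLinearGroup (Fin 2) (DualNumber (ZMod 2)))
        (A₀ : Matrix.SpecialLinearGroup (Fin 2) (ZMod 2))
        (B : Matrix (Fin 2) (Fin 2) (ZMod 2)), B.trace = 0 →
        (A : Matrix (Fin 2) (Fin 2) (DualNumber (ZMod 2))) =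
          (A₀ : Matrix (Fin 2) (Fin 2) (ZMod 2)).map
              (TrivSqZeroExt.inlHom (ZMod 2) (ZMod 2)) *
            (1 + B.map (fun x => (DualNumber.eps : DualNumber (ZMod 2)) *
              TrivSqZeroExt.inlHom (ZMod 2) (ZMod 2) x)) →
        myf A = (-1) ^ ((B 0 0).val + (B 0 1).val + (B 1 0).val) := by decide

theorem exceptional_character_exists :
    ∃ ε : Matrix.SpecialLinearGroup (Fin 2) (DualNumber (ZMod 2)) →* ℤˣ,
      ∀ (A : Matrix.SpecialLinearGroup (Fin 2) (DualNumber (ZMod 2)))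
        (A₀ : Matrix.SpecialLinearGroup (Fin 2) (ZMod 2))
        (B : Matrix (Fin 2) (Fin 2) (ZMod 2)), B.trace = 0 →
        (A : Matrix (Fin 2) (Fin 2) (DualNumber (ZMod 2))) =
          (A₀ : Matrix (Fin 2) (Fin 2) (ZMod 2)).map
              (TrivSqZeroExt.inlHom (ZMod 2) (ZMod 2)) *
            (1 + B.map (fun x => (DualNumber.eps : DualNumber (ZMod 2)) *
              TrivSqZeroExt.inlHom (ZMod 2) (ZMod 2) x)) →
        ε A = (-1) ^ ((B 0 0).val + (B 0 1).val + (B 1 0).val) :=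
  ⟨MonoidHom.mk' myf myf_mul, myf_formula⟩
end

section
/- For N ∈ {2,3,4}, the abelianization of SL(2,ℤ/Nℤ) is cyclic of order N. -/
lemma mem_comm_aux {G : Type*} [Group G] (a b x : G) (h : x = a * b * a⁻¹ * b⁻¹) :
    x ∈ commutator G := by
  rw [h, ← commutatorElement_def, commutator_def]
  exact Subgroup.commutator_mem_commutator (Subgroup.mem_top a) (Subgroup.mem_top b)

def M2 (m : Matrix (Fin 2) (Fin 2) (ZMod 2)) (h : m.det = 1 := by decide) :
    Matrix.SpecialLinearGroup (Fin 2) (ZMod 2) := ⟨m, h⟩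

def g2 : ℕ → ℕ → ℕ → ℕ → ZMod 2
  | 0, 1, 1, 0 => 1
  | 1, 0, 1, 1 => 1
  | 1, 1, 0, 1 => 1
  | _, _, _, _ => 0

def f2 (A : Matrix.SpecialLinearGroup (Fin 2) (ZMod 2)) : ZMod 2 :=
  g2 (A.val 0 0).val (A.val 0 1).val (A.val 1 0).val (A.val 1 1).val

def phi2 : Matrix.SpecialLinearGroup (Fin 2) (ZMod 2) →* Multiplicative (ZMod 2) where
  toFun A := Multiplicative.ofAdd (f2 A)
  map_one' := by decide
  map_mul' := by decide

def D2_0 : List (Matrix (Fin 2) (Fin 2) (ZMod 2)) := [!![0, 1; 1, 1], !![1, 0; 0, 1], !![1, 1; 1, 0]]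

lemma ker2 : ∀ A : Matrix.SpecialLinearGroup (Fin 2) (ZMod 2), f2 A = 0 → A ∈ commutator (Matrix.SpecialLinearGroup (Fin 2) (ZMod 2)) := by
  have hmem : ∀ A : Matrix.SpecialLinearGroup (Fin 2) (ZMod 2), f2 A = 0 → A.val ∈ D2_0 := by decide
  intro A hA
  have h' := hmem A hA
  simp only [D2_0, List.mem_cons, List.not_mem_nil, or_false] at h'
  rcases h' with h|h|h
  · exact mem_comm_aux (M2 !![0, 1; 1, 0]) (M2 !![0, 1; 1, 1]) A (Subtype.ext (h.trans (by decide)))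
  · exact mem_comm_aux (M2 !![0, 1; 1, 0]) (M2 !![0, 1; 1, 0]) A (Subtype.ext (h.trans (by decide)))
  · exact mem_comm_aux (M2 !![0, 1; 1, 0]) (M2 !![1, 1; 0, 1]) A (Subtype.ext (h.trans (by decide)))

lemma main2 : IsCyclic (Abelianization (Matrix.SpecialLinearGroup (Fin 2) (ZMod 2))) ∧
    Nat.card (Abelianization (Matrix.SpecialLinearGroup (Fin 2) (ZMod 2))) = 2 := by
  have hc : commutator (Matrix.SpecialLinearGroup (Fin 2) (ZMod 2)) = phi2.ker := by
    apply le_antisymm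
    · exact Abelianization.commutator_subset_ker phi2
    · intro A hA
      apply ker2
      have h1 : Multiplicative.ofAdd (f2 A) = 1 := hA
      simpa using h1
  have hsurj : Function.Surjective phi2 := by decide
  have e : Abelianization (Matrix.SpecialLinearGroup (Fin 2) (ZMod 2)) ≃* Multiplicative (ZMod 2) :=
    (QuotientGroup.quotientMulEquivOfEq hc).trans
      (QuotientGroup.quotientKerEquivOfSurjective phi2 hsurj)
  constructor
  · exact isCyclic_of_surjective e.symm e.symm.surjective
  · rw [Nat.card_congr e.toEquiv]
    simp [Nat.card_eq_fintype_card]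

def M3 (m : Matrix (Fin 2) (Fin 2) (ZMod 3)) (h : m.det = 1 := by decide) :
    Matrix.SpecialLinearGroup (Fin 2) (ZMod 3) := ⟨m, h⟩

def g3 : ℕ → ℕ → ℕ → ℕ → ZMod 3
  | 0, 1, 2, 1 => 2
  | 0, 1, 2, 2 => 1
  | 0, 2, 1, 1 => 1
  | 0, 2, 1, 2 => 2
  | 1, 0, 1, 1 => 2
  | 1, 0, 2, 1 => 1
  | 1, 1, 0, 1 => 1
  | 1, 1, 2, 0 => 2
  | 1, 2, 0, 1 => 2
  | 1, 2, 1, 0 => 1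
  | 2, 0, 1, 2 => 1
  | 2, 0, 2, 2 => 2
  | 2, 1, 0, 2 => 2
  | 2, 1, 2, 0 => 1
  | 2, 2, 0, 2 => 1
  | 2, 2, 1, 0 => 2
  | _, _, _, _ => 0

def f3 (A : Matrix.SpecialLinearGroup (Fin 2) (ZMod 3)) : ZMod 3 :=
  g3 (A.val 0 0).val (A.val 0 1).val (A.val 1 0).val (A.val 1 1).val

def phi3 : Matrix.SpecialLinearGroup (Fin 2) (ZMod 3) →* Multiplicative (ZMod 3) where
  toFun A := Multiplicative.ofAdd (f3 A)
  map_one' := by decide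
  map_mul' := by decide

def D3_0 : List (Matrix (Fin 2) (Fin 2) (ZMod 3)) := [!![0, 1; 2, 0], !![0, 2; 1, 0], !![1, 0; 0, 1], !![1, 1; 1, 2], !![1, 2; 2, 2], !![2, 0; 0, 2], !![2, 1; 1, 1], !![2, 2; 2, 1]]

lemma ker3 : ∀ A : Matrix.SpecialLinearGroup (Fin 2) (ZMod 3), f3 A = 0 → A ∈ commutator (Matrix.SpecialLinearGroup (Fin 2) (ZMod 3)) := by
  have hmem : ∀ A : Matrix.SpecialLinearGroup (Fin 2) (ZMod 3), f3 A = 0 → A.val ∈ D3_0 := by decide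
  intro A hA
  have h' := hmem A hA
  simp only [D3_0, List.mem_cons, List.not_mem_nil, or_false] at h'
  rcases h' with h|h|h|h|h|h|h|h
  · exact mem_comm_aux (M3 !![0, 1; 2, 2]) (M3 !![0, 1; 2, 1]) A (Subtype.ext (h.trans (by decide)))
  · exact mem_comm_aux (M3 !![0, 1; 2, 1]) (M3 !![0, 1; 2, 2]) A (Subtype.ext (h.trans (by decide)))
  · exact mem_comm_aux (M3 !![0, 1; 2, 0]) (M3 !![0, 1; 2, 0]) A (Subtype.ext (h.trans (by decide)))
  · exact mem_comm_aux (M3 !![0, 1; 2, 0]) (M3 !![1, 1; 2, 0]) A (Subtype.ext (h.trans (by decide)))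
  · exact mem_comm_aux (M3 !![0, 1; 2, 0]) (M3 !![1, 1; 0, 1]) A (Subtype.ext (h.trans (by decide)))
  · exact mem_comm_aux (M3 !![0, 1; 2, 0]) (M3 !![1, 1; 1, 2]) A (Subtype.ext (h.trans (by decide)))
  · exact mem_comm_aux (M3 !![0, 1; 2, 0]) (M3 !![0, 1; 2, 2]) A (Subtype.ext (h.trans (by decide)))
  · exact mem_comm_aux (M3 !![0, 1; 2, 0]) (M3 !![0, 1; 2, 1]) A (Subtype.ext (h.trans (by decide)))

lemma main3 : IsCyclic (Abelianization (Matrix.SpecialLinearGroup (Fin 2) (ZMod 3))) ∧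
    Nat.card (Abelianization (Matrix.SpecialLinearGroup (Fin 2) (ZMod 3))) = 3 := by
  have hc : commutator (Matrix.SpecialLinearGroup (Fin 2) (ZMod 3)) = phi3.ker := by
    apply le_antisymm
    · exact Abelianization.commutator_subset_ker phi3
    · intro A hA
      apply ker3
      have h1 : Multiplicative.ofAdd (f3 A) = 1 := hA
      simpa using h1
  have hsurj : Function.Surjective phi3 := by decide
  have e : Abelianization (Matrix.SpecialLinearGroup (Fin 2) (ZMod 3)) ≃* Multiplicative (ZMod 3) :=
    (QuotientGroup.quotientMulEquivOfEq hc).trans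
      (QuotientGroup.quotientKerEquivOfSurjective phi3 hsurj)
  constructor
  · exact isCyclic_of_surjective e.symm e.symm.surjective
  · rw [Nat.card_congr e.toEquiv]
    simp [Nat.card_eq_fintype_card]

def M4 (m : Matrix (Fin 2) (Fin 2) (ZMod 4)) (h : m.det = 1 := by decide) :
    Matrix.SpecialLinearGroup (Fin 2) (ZMod 4) := ⟨m, h⟩

def g4 : ℕ → ℕ → ℕ → ℕ → ZMod 4
  | 0, 1, 3, 0 => 3
  | 0, 1, 3, 1 => 2
  | 0, 1, 3, 2 => 1
  | 0, 3, 1, 0 => 1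
  | 0, 3, 1, 1 => 2
  | 0, 3, 1, 2 => 3
  | 1, 0, 1, 1 => 3
  | 1, 0, 2, 1 => 2
  | 1, 0, 3, 1 => 1
  | 1, 1, 0, 1 => 1
  | 1, 1, 2, 3 => 3
  | 1, 1, 3, 0 => 2
  | 1, 2, 0, 1 => 2
  | 1, 2, 1, 3 => 1
  | 1, 2, 3, 3 => 3
  | 1, 3, 0, 1 => 3
  | 1, 3, 1, 0 => 2
  | 1, 3, 2, 3 => 1
  | 2, 1, 1, 3 => 2
  | 2, 1, 3, 0 => 1
  | 2, 1, 3, 2 => 3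
  | 2, 3, 1, 0 => 3
  | 2, 3, 1, 2 => 1
  | 2, 3, 3, 3 => 2
  | 3, 0, 0, 3 => 2
  | 3, 0, 1, 3 => 3
  | 3, 0, 3, 3 => 1
  | 3, 1, 0, 3 => 1
  | 3, 1, 1, 2 => 2
  | 3, 1, 2, 1 => 3
  | 3, 2, 1, 1 => 1
  | 3, 2, 2, 3 => 2
  | 3, 2, 3, 1 => 3
  | 3, 3, 0, 3 => 3
  | 3, 3, 2, 1 => 1
  | 3, 3, 3, 2 => 2
  | _, _, _, _ => 0

def f4 (A : Matrix.SpecialLinearGroup (Fin 2) (ZMod 4)) : ZMod 4 :=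
  g4 (A.val 0 0).val (A.val 0 1).val (A.val 1 0).val (A.val 1 1).val

set_option maxHeartbeats 8000000 in
set_option maxRecDepth 20000 in
def phi4 : Matrix.SpecialLinearGroup (Fin 2) (ZMod 4) →* Multiplicative (ZMod 4) where
  toFun A := Multiplicative.ofAdd (f4 A)
  map_one' := by decide
  map_mul' := by decide

def D4_0 : List (Matrix (Fin 2) (Fin 2) (ZMod 4)) := [!![0, 1; 3, 3], !![0, 3; 1, 3], !![1, 0; 0, 1], !![1, 1; 1, 2], !![1, 2; 2, 1], !![1, 3; 3, 2], !![2, 1; 1, 1], !![2, 3; 3, 1], !![3, 0; 2, 3], !![3, 1; 3, 0], !![3, 2; 0, 3], !![3, 3; 1, 0]]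

lemma ker4 : ∀ A : Matrix.SpecialLinearGroup (Fin 2) (ZMod 4), f4 A = 0 → A ∈ commutator (Matrix.SpecialLinearGroup (Fin 2) (ZMod 4)) := by
  have hmem : ∀ A : Matrix.SpecialLinearGroup (Fin 2) (ZMod 4), f4 A = 0 → A.val ∈ D4_0 := by decide
  intro A hA
  have h' := hmem A hA
  simp only [D4_0, List.mem_cons, List.not_mem_nil, or_false] at h'
  rcases h' with h|h|h|h|h|h|h|h|h|h|h|h
  · exact mem_comm_aux (M4 !![0, 1; 3, 2]) (M4 !![0, 1; 3, 1]) A (Subtype.ext (h.trans (by decide)))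
  · exact mem_comm_aux (M4 !![0, 1; 3, 2]) (M4 !![0, 1; 3, 3]) A (Subtype.ext (h.trans (by decide)))
  · exact mem_comm_aux (M4 !![0, 1; 3, 0]) (M4 !![0, 1; 3, 0]) A (Subtype.ext (h.trans (by decide)))
  · exact mem_comm_aux (M4 !![0, 1; 3, 0]) (M4 !![1, 1; 1, 2]) A (Subtype.ext (h.trans (by decide)))
  · exact mem_comm_aux (M4 !![0, 1; 3, 0]) (M4 !![0, 1; 3, 2]) A (Subtype.ext (h.trans (by decide)))
  · exact mem_comm_aux (M4 !![0, 1; 3, 0]) (M4 !![1, 1; 0, 1]) A (Subtype.ext (h.trans (by decide)))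
  · exact mem_comm_aux (M4 !![0, 1; 3, 0]) (M4 !![0, 1; 3, 3]) A (Subtype.ext (h.trans (by decide)))
  · exact mem_comm_aux (M4 !![0, 1; 3, 0]) (M4 !![0, 1; 3, 1]) A (Subtype.ext (h.trans (by decide)))
  · exact mem_comm_aux (M4 !![0, 1; 3, 1]) (M4 !![1, 1; 1, 2]) A (Subtype.ext (h.trans (by decide)))
  · exact mem_comm_aux (M4 !![0, 1; 3, 1]) (M4 !![1, 1; 2, 3]) A (Subtype.ext (h.trans (by decide)))
  · exact mem_comm_aux (M4 !![0, 1; 3, 1]) (M4 !![0, 1; 3, 3]) A (Subtype.ext (h.trans (by decide)))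
  · exact mem_comm_aux (M4 !![0, 1; 3, 1]) (M4 !![0, 1; 3, 2]) A (Subtype.ext (h.trans (by decide)))

lemma main4 : IsCyclic (Abelianization (Matrix.SpecialLinearGroup (Fin 2) (ZMod 4))) ∧
    Nat.card (Abelianization (Matrix.SpecialLinearGroup (Fin 2) (ZMod 4))) = 4 := by
  have hc : commutator (Matrix.SpecialLinearGroup (Fin 2) (ZMod 4)) = phi4.ker := by
    apply le_antisymm
    · exact Abelianization.commutator_subset_ker phi4
    · intro A hA
      apply ker4
      have h1 : Multiplicative.ofAdd (f4 A) = 1 := hA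
      simpa using h1
  have hsurj : Function.Surjective phi4 := by decide
  have e : Abelianization (Matrix.SpecialLinearGroup (Fin 2) (ZMod 4)) ≃* Multiplicative (ZMod 4) :=
    (QuotientGroup.quotientMulEquivOfEq hc).trans
      (QuotientGroup.quotientKerEquivOfSurjective phi4 hsurj)
  constructor
  · exact isCyclic_of_surjective e.symm e.symm.surjective
  · rw [Nat.card_congr e.toEquiv]
    simp [Nat.card_eq_fintype_card]

theorem abelianization_SL2_ZModN_cyclic_order_N (N : ℕ) (hN : N = 2 ∨ N = 3 ∨ N = 4) :
    IsCyclic (Abelianization (Matrix.SpecialLinearGroup (Fin 2) (ZMod N))) ∧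
    Nat.card (Abelianization (Matrix.SpecialLinearGroup (Fin 2) (ZMod N))) = N := by
  rcases hN with rfl | rfl | rfl
  · exact main2
  · exact main3
  · exact main4
end
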